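/- arXiv:0810.4836 — 5 statements merged into one kernel-verified Lean document; each statement's English description precedes it below -/
import Mathlib

section
/- A finitely generated commutative cancellative semigroup S with zero is combinatorially finite (i.e., every element has only finitely many representations as a sum of nonzero elements) if and only if S ∩ (−S) = {0}, i.e., the only element m ∈ S such that −m ∈ S (in the associated group G(S)) is 0. -/
/-- A submonoid `S` of a commutative group (its Grothendieck/associated group) is
*combinatorially finite* if every element of `S` admits only finitely many
representations as a (finite, ordered) sum of nonzero elements of `S`. -/
def CombinatoriallyFinite {G : Type*} [AddCommGroup G] (S : AddSubmonoid G) : Prop :=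
  ∀ m ∈ S, {l : List G | (∀ x ∈ l, x ∈ S ∧ x ≠ 0) ∧ l.sum = m}.Finite

/-- A finitely generated commutative cancellative semigroup with zero is combinatorially
finite if and only if `S ∩ (−S) = {0}` in the associated group. -/
theorem combinatoriallyFinite_iff_inter_neg_eq_zero
    {G : Type*} [AddCommGroup G] (S : AddSubmonoid G) (hFG : S.FG) :
    CombinatoriallyFinite S ↔ ∀ m ∈ S, -m ∈ S → m = 0 := by
  constructor
  · -- If combinatorially finite, then S ∩ (-S) = {0}.
    intro hCF m hm hneg
    by_contra hm0
    have hfin := hCF 0 S.zero_mem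
    have hinj : Function.Injective
        (fun n : ℕ => List.replicate n m ++ List.replicate n (-m)) := by
      intro a b hab
      have := congrArg List.length hab
      simp only [List.length_append, List.length_replicate] at this
      omega
    have hInf : {l : List G | (∀ x ∈ l, x ∈ S ∧ x ≠ 0) ∧ l.sum = 0}.Infinite := by
      apply Set.infinite_of_injective_forall_mem hinj
      intro n
      constructor
      · intro x hx
        simp only [List.mem_append, List.mem_replicate] at hx
        rcases hx with ⟨-, rfl⟩ | ⟨-, rfl⟩
        · exact ⟨hm, hm0⟩
        · exact ⟨hneg, by simpa using hm0⟩
      · simp [List.sum_replicate]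
    exact hInf hfin
  · -- If S ∩ (-S) = {0}, then combinatorially finite.
    intro hS
    classical
    obtain ⟨T, hT⟩ := hFG
    -- index type for the generators
    set ι := {x : G // x ∈ T} with hι
    set φ : (ι → ℕ) → G := fun a => ∑ i : ι, a i • (i : G) with hφ
    have hφadd : ∀ a b : ι → ℕ, φ (a + b) = φ a + φ b := by
      intro a b
      simp [hφ, add_smul, Finset.sum_add_distrib]
    have hφzero : φ 0 = 0 := by simp [hφ]
    have hφmem : ∀ a : ι → ℕ, φ a ∈ S := by
      intro a
      refine AddSubmonoid.sum_mem S fun i _ => AddSubmonoid.nsmul_mem S ?_ _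
      have : (i : G) ∈ AddSubmonoid.closure (T : Set G) :=
        AddSubmonoid.subset_closure i.2
      rwa [hT] at this
    -- every element of S is represented by some vector
    have hrep : ∀ x ∈ S, ∃ a : ι → ℕ, φ a = x := by
      intro x hx
      rw [← hT] at hx
      obtain ⟨l, hl, hsum⟩ := AddSubmonoid.exists_list_of_mem_closure hx
      subst hsum
      clear hx
      induction l with
      | nil => exact ⟨0, hφzero⟩
      | cons y l' ih =>
        obtain ⟨a', ha'⟩ := ih fun z hz => hl z (List.mem_cons_of_mem _ hz)
        have hy : y ∈ T := hl y (List.mem_cons_self)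
        refine ⟨a' + Pi.single ⟨y, hy⟩ 1, ?_⟩
        rw [hφadd, ha']
        have : φ (Pi.single (⟨y, hy⟩ : ι) 1) = y := by
          show ∑ i : ι, Pi.single (⟨y, hy⟩ : ι) 1 i • (i : G) = y
          rw [Finset.sum_eq_single (⟨y, hy⟩ : ι)]
          · simp
          · intro b _ hb
            rw [Pi.single_eq_of_ne hb, zero_smul]
          · intro h; exact absurd (Finset.mem_univ _) h
        rw [this, List.sum_cons, add_comm]
    -- a choice of representation
    have hcex : ∀ x : G, ∃ a : ι → ℕ, x ∈ S → φ a = x := by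
      intro x
      by_cases hx : x ∈ S
      · obtain ⟨a, ha⟩ := hrep x hx; exact ⟨a, fun _ => ha⟩
      · exact ⟨0, fun h => absurd h hx⟩
    choose c hc using hcex
    have hφsum : ∀ l : List (ι → ℕ), φ l.sum = (l.map φ).sum := by
      intro l
      induction l with
      | nil => simpa using hφzero
      | cons a l ih => simp [hφadd, ih]
    -- key lemma via Higman's lemma structure
    have key : ∀ la lb : List (ι → ℕ), List.SublistForall₂ (· ≤ ·) la lb →
        ∃ d ∈ S, φ lb.sum = φ la.sum + d ∧
          (d = 0 → la.map φ = lb.map φ ∨ ∃ b ∈ lb, φ b = 0) := by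
      intro la lb h
      induction h with
      | nil =>
        rename_i lb
        refine ⟨φ lb.sum, hφmem _, by rw [List.sum_nil, hφzero, zero_add], ?_⟩
        intro hd
        cases lb with
        | nil => exact Or.inl rfl
        | cons b lb' =>
          refine Or.inr ⟨b, List.mem_cons_self, ?_⟩
          rw [List.sum_cons, hφadd] at hd
          refine hS _ (hφmem b) ?_
          rw [neg_eq_of_add_eq_zero_right hd]
          exact hφmem _
      | @cons a₁ a₂ l₁ l₂ hab hsf ih =>
        obtain ⟨d, hd, heq, h0⟩ := ih
        have ha₂ : a₂ = a₁ + (a₂ - a₁) := by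
          funext i
          have := Pi.le_def.1 hab i
          simp only [Pi.add_apply, Pi.sub_apply]
          omega
        refine ⟨φ (a₂ - a₁) + d, S.add_mem (hφmem _) hd, ?_, ?_⟩
        · rw [List.sum_cons, List.sum_cons, hφadd, hφadd, heq]
          nth_rewrite 1 [ha₂]
          rw [hφadd]
          abel
        · intro hzero
          have he : φ (a₂ - a₁) = 0 := by
            refine hS _ (hφmem _) ?_
            rw [neg_eq_of_add_eq_zero_right hzero]
            exact hd
          have hd0 : d = 0 := by rwa [he, zero_add] at hzero
          rcases h0 hd0 with hmap | ⟨b, hb, hb0⟩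
          · refine Or.inl ?_
            have : φ a₂ = φ a₁ := by
              nth_rewrite 1 [ha₂]
              rw [hφadd, he, add_zero]
            simp [List.map_cons, this, hmap]
          · exact Or.inr ⟨b, List.mem_cons_of_mem _ hb, hb0⟩
      | @cons_right b l₁ l₂ hsf ih =>
        obtain ⟨d, hd, heq, h0⟩ := ih
        refine ⟨φ b + d, S.add_mem (hφmem _) hd, ?_, ?_⟩
        · rw [List.sum_cons, hφadd, heq]; abel
        · intro hzero
          refine Or.inr ⟨b, List.mem_cons_self, ?_⟩
          refine hS _ (hφmem _) ?_
          rw [neg_eq_of_add_eq_zero_right hzero]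
          exact hd
    -- main argument
    intro m hm
    by_contra hinf
    have hInf : {l : List G | (∀ x ∈ l, x ∈ S ∧ x ≠ 0) ∧ l.sum = m}.Infinite := hinf
    set f := hInf.natEmbedding with hf
    have hPWO : (Set.univ : Set (ι → ℕ)).IsPWO :=
      Set.isPWO_univ_iff.mpr inferInstance
    have hH := Set.PartiallyWellOrderedOn.partiallyWellOrderedOn_sublistForall₂
      ((· ≤ ·) : (ι → ℕ) → (ι → ℕ) → Prop) hPWO
    obtain ⟨i, j, hij, hrel⟩ := hH (fun n => ⟨((f n : List G)).map c,
      (fun x _ => Set.mem_univ x)⟩)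
    -- derive f i = f j, contradiction
    have hmemi := (f i).2
    have hmemj := (f j).2
    simp only [Set.mem_setOf_eq] at hmemi hmemj
    have hmapi : (((f i : List G)).map c).map φ = (f i : List G) := by
      rw [List.map_map]
      have h1 := List.map_congr_left (f := φ ∘ c) (g := fun x => x)
        (fun x hx => hc x (hmemi.1 x hx).1)
      simpa using h1
    have hmapj : (((f j : List G)).map c).map φ = (f j : List G) := by
      rw [List.map_map]
      have h1 := List.map_congr_left (f := φ ∘ c) (g := fun x => x)
        (fun x hx => hc x (hmemj.1 x hx).1)
      simpa using h1
    obtain ⟨d, hd, heq, h0⟩ := key _ _ hrel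
    rw [hφsum, hφsum, hmapi, hmapj, hmemi.2, hmemj.2] at heq
    have hd0 : d = 0 := by
      have := heq.symm
      rwa [left_eq_add] at heq
    rcases h0 hd0 with hmap | ⟨b, hb, hb0⟩
    · rw [hmapi, hmapj] at hmap
      have : f i = f j := Subtype.ext hmap
      exact absurd (f.injective this) (Nat.ne_of_lt hij)
    · obtain ⟨x, hx, rfl⟩ := List.mem_map.1 hb
      exact (hmemj.1 x hx).2 (by rw [← hc x (hmemj.1 x hx).1, hb0])
end

section
/- The toric ideal I_S = ker(φ_0), where φ_0 : k[x_1,…,x_r] → k[S] sends x_i ↦ χ^{n_i}, is generated by the set of pure difference binomials { x^α − x^β : Σ_i α_i n_i = Σ_i β_i n_i }. -/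
open MvPolynomial

section Aux

variable {k : Type} [Field k] {M : Type} [AddCommMonoid M]

lemma aux_prod_single {r : ℕ} (m : Fin r → M) (α : Fin r →₀ ℕ) :
    (α.prod fun i e => (AddMonoidAlgebra.single (m i) (1:k)) ^ e)
      = AddMonoidAlgebra.single (α.sum fun i e => e • m i) 1 := by
  classical
  induction α using Finsupp.induction with
  | zero => simp [AddMonoidAlgebra.one_def]
  | single_add i e f hif he ih =>
      rw [Finsupp.prod_add_index' (fun a => pow_zero _) (fun a b₁ b₂ => pow_add _ b₁ b₂),
          Finsupp.sum_add_index' (fun a => zero_smul ℕ (m a)) (fun a b₁ b₂ => add_smul b₁ b₂ (m a)),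
          ih]
      simp [Finsupp.prod_single_index, Finsupp.sum_single_index,
        AddMonoidAlgebra.single_pow, AddMonoidAlgebra.single_mul_single]

end Aux

/-- The toric ideal `I_S = ker(φ₀)`, where `φ₀ : k[x_1,…,x_r] → k[S]` sends
`x_i ↦ χ^{n_i}`, is generated by the pure difference binomials
`x^α − x^β` with `Σ α_i n_i = Σ β_i n_i`. -/
theorem toric_ideal_generated_by_binomials
    {G : Type} [AddCommGroup G] (k : Type) [Field k]
    (S : AddSubmonoid G) (hFG : S.FG)
    (hcf : ∀ m ∈ S, -m ∈ S → m = 0)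
    {r : ℕ} (n : Fin r → G) (hn : ∀ i, n i ≠ 0)
    (hgen : S = AddSubmonoid.closure (Set.range n)) (hmem : ∀ i, n i ∈ S) :
    RingHom.ker (MvPolynomial.aeval
        (fun i : Fin r => AddMonoidAlgebra.single (⟨n i, hmem i⟩ : S) (1 : k)) :
          MvPolynomial (Fin r) k →ₐ[k] AddMonoidAlgebra k S).toRingHom =
    Ideal.span {f : MvPolynomial (Fin r) k |
      ∃ α β : Fin r →₀ ℕ,
        (α.sum fun i e => e • n i) = (β.sum fun i e => e • n i) ∧
        f = monomial α (1 : k) - monomial β (1 : k)} := by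
  classical
  set φ : MvPolynomial (Fin r) k →ₐ[k] AddMonoidAlgebra k S :=
    MvPolynomial.aeval
      (fun i : Fin r => AddMonoidAlgebra.single (⟨n i, hmem i⟩ : S) (1 : k)) with hφ
  set σ : (Fin r →₀ ℕ) → S := fun α => α.sum fun i e => e • (⟨n i, hmem i⟩ : S) with hσ
  have hcoe : ∀ α : Fin r →₀ ℕ, ((σ α : S) : G) = α.sum fun i e => e • n i := by
    intro α
    rw [hσ]
    simp only [Finsupp.sum]
    push_cast
    rfl
  have hσeq : ∀ α β : Fin r →₀ ℕ,
      (α.sum fun i e => e • n i) = (β.sum fun i e => e • n i) ↔ σ α = σ β := by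
    intro α β
    rw [← hcoe, ← hcoe]
    exact ⟨fun h => Subtype.ext h, fun h => congrArg _ h⟩
  have hmono : ∀ (α : Fin r →₀ ℕ) (c : k),
      φ (monomial α c) = AddMonoidAlgebra.single (σ α) c := by
    intro α c
    rw [hφ, aeval_monomial, aux_prod_single]
    rw [show (algebraMap k (AddMonoidAlgebra k S)) c = AddMonoidAlgebra.single 0 c from rfl,
        AddMonoidAlgebra.single_mul_single, zero_add, mul_one]
  have hcoeffφ : ∀ (f : MvPolynomial (Fin r) k) (s : S),
      (φ f).coeff s = ∑ α ∈ f.support, if σ α = s then f.coeff α else 0 := by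
    intro f s
    conv_lhs => rw [f.as_sum, map_sum]
    rw [AddMonoidAlgebra.coeff_sum, Finsupp.finset_sum_apply]
    refine Finset.sum_congr rfl fun α hα => ?_
    rw [hmono, AddMonoidAlgebra.coeff_single]
    exact Finsupp.single_apply
  set Gen : Set (MvPolynomial (Fin r) k) := {f : MvPolynomial (Fin r) k |
      ∃ α β : Fin r →₀ ℕ,
        (α.sum fun i e => e • n i) = (β.sum fun i e => e • n i) ∧
        f = monomial α (1 : k) - monomial β (1 : k)} with hGen
  apply le_antisymm
  · -- ker ≤ span
    intro f hf
    rw [RingHom.mem_ker] at hf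
    -- strong induction on support card
    have H : ∀ (N : ℕ) (f : MvPolynomial (Fin r) k), f.support.card ≤ N →
        φ f = 0 → f ∈ Ideal.span Gen := by
      intro N
      induction N with
      | zero =>
          intro f hcard _
          have : f = 0 := by
            rwa [Nat.le_zero, Finset.card_eq_zero, MvPolynomial.support_eq_empty] at hcard
          simp [this]
      | succ N ih =>
          intro f hcard hker
          by_cases hf0 : f = 0
          · simp [hf0]
          obtain ⟨α, hα⟩ := (MvPolynomial.support_nonempty.mpr hf0)
          have hcα : f.coeff α ≠ 0 := MvPolynomial.mem_support_iff.mp hα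
          have hsum : ∑ γ ∈ f.support, (if σ γ = σ α then f.coeff γ else 0) = 0 := by
            rw [← hcoeffφ, hker]; rfl
          rw [← Finset.add_sum_erase _ _ hα, if_pos rfl] at hsum
          have hne : ∑ γ ∈ f.support.erase α, (if σ γ = σ α then f.coeff γ else 0) ≠ 0 := by
            intro h
            rw [h, add_zero] at hsum
            exact hcα hsum
          obtain ⟨β, hβmem, hβ⟩ := Finset.exists_ne_zero_of_sum_ne_zero hne
          have hσβ : σ β = σ α := by
            by_contra h
            rw [if_neg h] at hβ
            exact hβ rfl
          have hβα : β ≠ α := (Finset.mem_erase.mp hβmem).1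
          have hβsupp : β ∈ f.support := (Finset.mem_erase.mp hβmem).2
          set b : MvPolynomial (Fin r) k := monomial α (1:k) - monomial β 1 with hb
          have hbGen : b ∈ Gen := ⟨α, β, (hσeq α β).mpr hσβ.symm, rfl⟩
          have hφb : φ b = 0 := by
            rw [hb, map_sub, hmono, hmono, hσβ, sub_self]
          set f' : MvPolynomial (Fin r) k := f - MvPolynomial.C (f.coeff α) * b with hf'
          have hker' : φ f' = 0 := by
            rw [hf', map_sub, map_mul, hφb, mul_zero, sub_zero, hker]
          have hcoeff' : ∀ γ, f'.coeff γ =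
              f.coeff γ - f.coeff α * ((if α = γ then (1:k) else 0) - if β = γ then 1 else 0) := by
            intro γ
            rw [hf', MvPolynomial.coeff_sub, MvPolynomial.coeff_C_mul, hb,
              MvPolynomial.coeff_sub, MvPolynomial.coeff_monomial, MvPolynomial.coeff_monomial]
          have hsupp' : f'.support ⊆ f.support.erase α := by
            intro γ hγ
            have hγ0 : f'.coeff γ ≠ 0 := MvPolynomial.mem_support_iff.mp hγ
            rw [Finset.mem_erase]
            constructor
            · intro h
              apply hγ0
              rw [hcoeff', h, if_pos rfl, if_neg (by simpa using hβα), sub_zero, mul_one, sub_self]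
            · by_cases hγβ : γ = β
              · rw [hγβ]; exact hβsupp
              by_cases hγα : γ = α
              · rw [hγα]; exact hα
              rw [MvPolynomial.mem_support_iff]
              intro h
              apply hγ0
              rw [hcoeff', h, if_neg (fun h' => hγα h'.symm), if_neg (fun h' => hγβ h'.symm)]
              ring
          have hcard' : f'.support.card ≤ N := by
            calc f'.support.card ≤ (f.support.erase α).card := Finset.card_le_card hsupp'
            _ = f.support.card - 1 := Finset.card_erase_of_mem hα
            _ ≤ N := by omega
          have hf'mem := ih f' hcard' hker'
          have hfdec : f = f' + MvPolynomial.C (f.coeff α) * b := by rw [hf']; ring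
          rw [hfdec]
          exact Ideal.add_mem _ hf'mem (Ideal.mul_mem_left _ _ (Ideal.subset_span hbGen))
    exact H f.support.card f le_rfl hf
  · rw [Ideal.span_le]
    rintro f ⟨α, β, hαβ, rfl⟩
    rw [SetLike.mem_coe, RingHom.mem_ker]
    show φ _ = 0
    rw [map_sub, hmono, hmono, (hσeq α β).mp hαβ, sub_self]
end

section
/- Let m, m' ∈ S with m' ≼_S m, and fix β ∈ C_{m−m'}. Then the map α' ↦ α' + β defines a simplicial isomorphism from ∇_{m'} onto the subcomplex { F ∈ ∇_m : x^β properly divides gcd(F) } of ∇_m, i.e., onto the complex of faces F of ∇_m such that β is componentwise ≤ the componentwise minimum of F and not equal to it. -/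
/-- The simplicial complex `∇_μ` on the vertex set `C_μ`: nonempty subsets of
factorizations of `μ` whose componentwise minimum (the gcd of the monomials) is nonzero. -/
def nablaComplex {G : Type} [AddCommGroup G] {r : ℕ} (n : Fin r → G) (μ : G) :
    Set (Finset (Fin r → ℕ)) :=
  {F | F.Nonempty ∧ (∀ α ∈ F, (∑ i, α i • n i) = μ) ∧ ∃ i, ∀ α ∈ F, 0 < α i}

/-- If `m' ≼_S m` and `β ∈ C_{m−m'}`, the map `α' ↦ α' + β` is a simplicial isomorphism
from `∇_{m'}` onto the subcomplex of faces `F` of `∇_m` such that `x^β` properly divides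
`gcd(F)`. -/
theorem nabla_of_smaller_degree
    {G : Type} [AddCommGroup G] (S : AddSubmonoid G) (hFG : S.FG)
    (hcf : ∀ g ∈ S, -g ∈ S → g = 0)
    {r : ℕ} (n : Fin r → G) (hn : ∀ i, n i ≠ 0)
    (hgen : S = AddSubmonoid.closure (Set.range n))
    (m m' : G) (hm : m ∈ S) (hm' : m' ∈ S) (hle : ∃ s ∈ S, m' + s = m)
    (β : Fin r → ℕ) (hβ : (∑ i, β i • n i) = m - m') :
    Set.BijOn (fun F : Finset (Fin r → ℕ) => F.image (fun a => a + β))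
      (nablaComplex n m')
      {F : Finset (Fin r → ℕ) | ∃ h : F.Nonempty,
        F ∈ nablaComplex n m ∧ β ≤ F.inf' h id ∧ β ≠ F.inf' h id} := by
  have hinj : Function.Injective (fun a : Fin r → ℕ => a + β) := fun a b h => by
    simpa using add_left_injective β h
  refine ⟨?_, (Finset.image_injective hinj).injOn, ?_⟩
  · rintro F ⟨hne, hsum, i, hi⟩
    have hne' : (F.image (fun a => a + β)).Nonempty := hne.image _
    have hlt : ∀ b ∈ F.image (fun a => a + β), β i < b i := by
      intro b hb
      obtain ⟨a, ha, rfl⟩ := Finset.mem_image.mp hb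
      simpa using hi a ha
    have hleinf : β ≤ (F.image (fun a => a + β)).inf' hne' id := by
      apply Finset.le_inf'
      intro b hb
      obtain ⟨a, ha, rfl⟩ := Finset.mem_image.mp hb
      exact le_add_self
    refine ⟨hne', ⟨hne', ?_, ⟨i, ?_⟩⟩, hleinf, ?_⟩
    · intro α hα
      obtain ⟨a, ha, rfl⟩ := Finset.mem_image.mp hα
      have : ∑ j, (a + β) j • n j = (∑ j, a j • n j) + ∑ j, β j • n j := by
        rw [← Finset.sum_add_distrib]
        exact Finset.sum_congr rfl fun j _ => by simp [add_smul]
      rw [this, hsum a ha, hβ]; abel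
    · intro α hα
      exact lt_of_le_of_lt (Nat.zero_le _) (hlt α hα)
    · intro heq
      have h1 : β i < ((F.image (fun a => a + β)).inf' hne' id) i := by
        rw [Finset.inf'_apply]
        exact (Finset.lt_inf'_iff _).mpr fun b hb => hlt b hb
      rw [← heq] at h1
      exact lt_irrefl _ h1
  · rintro F ⟨hne, ⟨-, hsum, j, hj⟩, hle', hneq⟩
    have hble : ∀ a ∈ F, β ≤ a := fun a ha =>
      le_trans hle' (Finset.inf'_le id ha)
    refine ⟨F.image (fun a => a - β), ⟨hne.image _, ?_, ?_⟩, ?_⟩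
    · intro b hb
      obtain ⟨a, ha, rfl⟩ := Finset.mem_image.mp hb
      have hab : a - β + β = a := tsub_add_cancel_of_le (hble a ha)
      have hsplit : ∑ k, a k • n k = (∑ k, (a - β) k • n k) + ∑ k, β k • n k := by
        rw [← Finset.sum_add_distrib]
        refine Finset.sum_congr rfl fun k _ => ?_
        rw [← add_smul]
        congr 1
        exact (congrFun hab k).symm
      have := hsum a ha
      rw [hsplit, hβ] at this
      have : ∑ k, (a - β) k • n k = m - (m - m') := eq_sub_of_add_eq this
      simpa using this
    · obtain ⟨i, hi⟩ := Function.ne_iff.mp hneq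
      have hilt : β i < (F.inf' hne id) i := lt_of_le_of_ne (hle' i) hi
      refine ⟨i, fun b hb => ?_⟩
      obtain ⟨a, ha, rfl⟩ := Finset.mem_image.mp hb
      have hai : β i < a i := lt_of_lt_of_le hilt (Finset.inf'_le id ha i)
      simpa [Pi.sub_apply] using Nat.sub_pos_of_lt hai
    · show Finset.image (fun a => a + β) (Finset.image (fun a => a - β) F) = F
      rw [Finset.image_image]
      have : ((fun a => a + β) ∘ fun a => a - β) = fun a : Fin r → ℕ => a - β + β := rfl
      rw [this, Finset.image_congr (fun a ha => tsub_add_cancel_of_le (hble a ha)),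
        Finset.image_id']
end

section
/- For m ∈ S, the k-linear map ψ_0 : k^{C_m} → R sending the basis vector at α ∈ C_m to the monomial x^α restricts to an isomorphism from the space of reduced 0-cycles Z̃_0(∇_m) = ker(∂_0) onto the degree-m component (I_S)_m of the toric ideal I_S. -/
open MvPolynomial

lemma psi0_prod_single_one {k : Type} [Field k] {T : Type} [AddCommMonoid T]
    {ι : Type} [DecidableEq ι] (t : Finset ι) (f : ι → T) :
    (∏ i ∈ t, AddMonoidAlgebra.single (f i) (1 : k)) =
      AddMonoidAlgebra.single (∑ i ∈ t, f i) 1 := by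
  induction t using Finset.induction with
  | empty => simp [AddMonoidAlgebra.one_def]
  | insert a s h ih =>
      rw [Finset.prod_insert h, Finset.sum_insert h, ih,
        AddMonoidAlgebra.single_mul_single, one_mul]

lemma psi0_aeval_monomial {k : Type} [Field k] {T : Type} [AddCommMonoid T]
    {r : ℕ} (f : Fin r → T) (α : Fin r →₀ ℕ) :
    aeval (fun i => AddMonoidAlgebra.single (f i) (1 : k)) (monomial α (1 : k)) =
      AddMonoidAlgebra.single (α.sum fun i e => e • f i) 1 := by
  rw [monomial_eq, Finsupp.prod]
  simp only [map_one, one_mul, map_prod, map_pow, aeval_X, AddMonoidAlgebra.single_pow, one_pow]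
  rw [psi0_prod_single_one, Finsupp.sum]

lemma psi0_coeff {k : Type} [Field k] {r : ℕ} (c : (Fin r →₀ ℕ) →₀ k) (d : Fin r →₀ ℕ) :
    coeff d (Finsupp.linearCombination k
      (fun α : Fin r →₀ ℕ => (monomial α (1 : k))) c) = c d := by
  classical
  rw [Finsupp.linearCombination_apply, Finsupp.sum, coeff_sum]
  simp only [coeff_smul, coeff_monomial, smul_eq_mul, mul_ite, mul_one, mul_zero]
  rw [Finset.sum_ite_eq' c.support d (fun α => c α)]
  by_cases h : d ∈ c.support
  · simp [h]
  · simp [h, Finsupp.notMem_support_iff.mp h]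

/-- For `m ∈ S`, the `k`-linear map `ψ₀` sending the basis vector at `α ∈ C_m` to the
monomial `x^α` restricts to an isomorphism from the reduced `0`-cycles
`Z̃₀(∇_m) = ker ∂₀` (formal combinations supported on `C_m` with coefficient sum zero)
onto the `S`-degree-`m` component `(I_S)_m` of the toric ideal. -/
theorem psi0_cycles_iso_ISm
    {G : Type} [AddCommGroup G] (k : Type) [Field k]
    (S : AddSubmonoid G) (hFG : S.FG) (hcf : ∀ g ∈ S, -g ∈ S → g = 0)
    {r : ℕ} (n : Fin r → G) (hn : ∀ i, n i ≠ 0)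
    (hgen : S = AddSubmonoid.closure (Set.range n)) (hmem : ∀ i, n i ∈ S)
    (m : G) (hm : m ∈ S) :
    -- the toric ideal
    ∀ IS : Ideal (MvPolynomial (Fin r) k),
      IS = RingHom.ker (MvPolynomial.aeval
        (fun i : Fin r => AddMonoidAlgebra.single (⟨n i, hmem i⟩ : S) (1 : k)) :
          MvPolynomial (Fin r) k →ₐ[k] AddMonoidAlgebra k S).toRingHom →
    -- the reduced 0-cycles of ∇_m : chains supported on C_m killed by the augmentation
    ∀ Z : Submodule k ((Fin r →₀ ℕ) →₀ k),
      Z = Finsupp.supported k k {α : Fin r →₀ ℕ | (α.sum fun i e => e • n i) = m} ⊓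
            LinearMap.ker (Finsupp.linearCombination k (fun _ : Fin r →₀ ℕ => (1 : k))) →
    -- ψ₀ maps Z̃₀(∇_m) bijectively onto (I_S)_m
    (Submodule.map
        (Finsupp.linearCombination k (fun α : Fin r →₀ ℕ => (monomial α (1 : k)))) Z =
      IS.restrictScalars k ⊓ weightedHomogeneousSubmodule k n m) ∧
    (∀ c ∈ Z,
      Finsupp.linearCombination k (fun α : Fin r →₀ ℕ => (monomial α (1 : k))) c = 0 →
      c = 0) := by
  classical
  intro IS hIS Z hZ
  set ψ := Finsupp.linearCombination k (fun α : Fin r →₀ ℕ => (monomial α (1 : k))) with hψ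
  set φ := fun i : Fin r => AddMonoidAlgebra.single (⟨n i, hmem i⟩ : S) (1 : k) with hφ
  -- coercion of degrees
  have hcoe : ∀ α : Fin r →₀ ℕ,
      (((α.sum fun i e => e • (⟨n i, hmem i⟩ : S) : S)) : G) = α.sum fun i e => e • n i := by
    intro α
    rw [← AddSubmonoid.coe_subtype, map_finsuppSum]
    simp
  -- key computation of aeval on ψ c for c supported on C_m
  have haev : ∀ c : (Fin r →₀ ℕ) →₀ k,
      (∀ α ∈ c.support, (α.sum fun i e => e • n i) = m) →
      aeval φ (ψ c) = AddMonoidAlgebra.single (⟨m, hm⟩ : S) (∑ α ∈ c.support, c α) := by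
    intro c hc
    rw [hψ, Finsupp.linearCombination_apply, Finsupp.sum, map_sum]
    have step : ∀ α ∈ c.support,
        (aeval φ) (c α • monomial α (1 : k)) =
          AddMonoidAlgebra.single (⟨m, hm⟩ : S) (c α) := by
      intro α hα
      have hdeg : (α.sum fun i e => e • (⟨n i, hmem i⟩ : S)) = (⟨m, hm⟩ : S) :=
        Subtype.ext (by rw [hcoe α]; exact hc α hα)
      rw [map_smul, hφ, psi0_aeval_monomial, hdeg, AddMonoidAlgebra.smul_single', mul_one]
    rw [Finset.sum_congr rfl step]
    exact (map_sum (AddMonoidAlgebra.singleAddHom (⟨m, hm⟩ : S)) _ _).symm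
  -- sum over support computes ∂₀
  have hker_iff : ∀ c : (Fin r →₀ ℕ) →₀ k,
      Finsupp.linearCombination k (fun _ : Fin r →₀ ℕ => (1 : k)) c =
        ∑ α ∈ c.support, c α := by
    intro c
    rw [Finsupp.linearCombination_apply, Finsupp.sum]
    simp
  constructor
  · ext p
    simp only [Submodule.mem_map, Submodule.mem_inf, Submodule.restrictScalars_mem,
      mem_weightedHomogeneousSubmodule]
    constructor
    · rintro ⟨c, hcZ, rfl⟩
      rw [hZ, Submodule.mem_inf] at hcZ
      obtain ⟨hsupp, hker⟩ := hcZ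
      rw [Finsupp.mem_supported] at hsupp
      rw [LinearMap.mem_ker] at hker
      have hcm : ∀ α ∈ c.support, (α.sum fun i e => e • n i) = m := fun α hα =>
        hsupp hα
      have hsum : ∑ α ∈ c.support, c α = 0 := by rw [← hker_iff c, hker]
      constructor
      · have h0 : aeval φ (ψ c) = 0 := by
          rw [haev c hcm, hsum]
          simp
        rw [hIS, RingHom.mem_ker]
        exact h0
      · intro d hd
        rw [hψ, psi0_coeff] at hd
        have := hcm d (Finsupp.mem_support_iff.mpr hd)
        rwa [Finsupp.weight_apply]
    · rintro ⟨hker, hhom⟩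
      set c := (basisMonomials (Fin r) k).repr p with hc
      have hψc : ψ c = p := by
        rw [hψ, hc]
        have := Module.Basis.linearCombination_repr (basisMonomials (Fin r) k) p
        rwa [coe_basisMonomials] at this
      have hcd : ∀ d, c d = coeff d p := by
        intro d
        rw [← hψc, hψ, psi0_coeff]
      have hcm : ∀ α ∈ c.support, (α.sum fun i e => e • n i) = m := by
        intro α hα
        have h1 : coeff α p ≠ 0 := by
          rw [← hcd α]; exact Finsupp.mem_support_iff.mp hα
        have := hhom h1
        rwa [Finsupp.weight_apply] at this
      have hz : aeval φ p = 0 := by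
        rw [hIS, RingHom.mem_ker, AlgHom.toRingHom_eq_coe, RingHom.coe_coe] at hker
        exact hker
      have hsum : ∑ α ∈ c.support, c α = 0 := by
        have := haev c hcm
        rw [hψc, hz] at this
        exact (AddMonoidAlgebra.single_eq_zero.mp this.symm)
      refine ⟨c, ?_, hψc⟩
      rw [hZ, Submodule.mem_inf]
      refine ⟨(Finsupp.mem_supported k c).mpr (fun α hα => hcm α hα), ?_⟩
      rw [LinearMap.mem_ker, hker_iff c, hsum]
  · intro c _ h
    ext d
    have : c d = coeff d (ψ c) := (psi0_coeff c d).symm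
    rw [h, coeff_zero] at this
    simp [this]
end

section
/- For every m ∈ S there is a k-vector space isomorphism H̃_0(∇_m) ≅ (I_S)_m / (𝔪 I_S)_m, where H̃_0 denotes reduced 0-th simplicial homology with coefficients in k. In particular, the number of elements of S-degree m in any minimal homogeneous generating set of I_S equals dim_k H̃_0(∇_m), and I_S has a minimal generator of degree m if and only if ∇_m is disconnected. -/
open MvPolynomial

section SimplicialHomology

variable (k : Type) [Field k] {V : Type} [LinearOrder V]

/-- The (reduced) simplicial boundary operator on formal `k`-linear combinations of finite
subsets of the (linearly ordered) vertex set `V`, with the usual alternating signs. -/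
noncomputable def sBoundary : (Finset V →₀ k) →ₗ[k] (Finset V →₀ k) :=
  Finsupp.lsum k fun F =>
    LinearMap.toSpanSingleton k _
      (∑ x ∈ F, ((-1 : k) ^ (F.filter (fun y => y < x)).card) •
        Finsupp.single (F.erase x) (1 : k))

/-- The faces of cardinality `c` of the simplicial complex `K` (the empty face is always
included, so that the chain complex below computes *reduced* homology). -/
def sFaces (K : Set (Finset V)) (c : ℕ) : Set (Finset V) :=
  {F | F.card = c ∧ (F = ∅ ∨ F ∈ K)}

/-- The reduced `j`-cycles `Z̃_j(K)`: chains supported on the `j`-dimensional faces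
(of cardinality `j+1`) killed by the boundary operator. -/
noncomputable def sCycles (K : Set (Finset V)) (j : ℕ) : Submodule k (Finset V →₀ k) :=
  Finsupp.supported k k (sFaces K (j + 1)) ⊓ LinearMap.ker (sBoundary k)

/-- The reduced `j`-boundaries `B̃_j(K)`: images under the boundary operator of chains
supported on the `(j+1)`-dimensional faces (of cardinality `j+2`). -/
noncomputable def sBoundaries (K : Set (Finset V)) (j : ℕ) : Submodule k (Finset V →₀ k) :=
  Submodule.map (sBoundary k) (Finsupp.supported k k (sFaces K (j + 2)))

/-- The reduced `j`-th simplicial homology `H̃_j(K) = Z̃_j(K)/B̃_j(K)` of `K` with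
coefficients in `k`, realized as the image of the cycles in the quotient of the chain
space by the boundaries. -/
noncomputable def sHred (K : Set (Finset V)) (j : ℕ) :
    Submodule k ((Finset V →₀ k) ⧸ sBoundaries k K j) :=
  Submodule.map (sBoundaries k K j).mkQ (sCycles k K j)

end SimplicialHomology

/-- The simplicial complex `∇_m` on the vertex set `C_m ⊆ ℕ^r` (with the lexicographic
linear order on vertices). -/
def nablaLex {G : Type} [AddCommGroup G] {r : ℕ} (n : Fin r → G) (m : G) :
    Set (Finset (Lex (Fin r →₀ ℕ))) :=
  {F | F.Nonempty ∧ (∀ a ∈ F, ((ofLex a).sum fun i e => e • n i) = m) ∧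
    ∃ i, ∀ a ∈ F, 0 < ofLex a i}

namespace H0Aux

/-! ### Generic linear-algebra lemmas -/

theorem sub_sum_mem {k M ι : Type} [Field k] [AddCommGroup M] [Module k M] (N : Submodule k M)
    (v : ι → M) (s : Finset ι) (c : ι → k) (h0 : ∑ a ∈ s, c a = 0) (a₀ : ι)
    (hv : ∀ a ∈ s, v a - v a₀ ∈ N) : (∑ a ∈ s, c a • v a) ∈ N := by
  have h : ∑ a ∈ s, c a • (v a - v a₀) = ∑ a ∈ s, c a • v a := by
    simp only [smul_sub, Finset.sum_sub_distrib, ← Finset.sum_smul, h0, zero_smul, sub_zero]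
  rw [← h]
  exact Submodule.sum_mem _ fun a ha => N.smul_mem _ (hv a ha)

theorem quotIso {k W₁ W₂ : Type} [Field k] [AddCommGroup W₁] [AddCommGroup W₂]
    [Module k W₁] [Module k W₂]
    (B₁ Z₁ : Submodule k W₁) (B₂ Z₂ : Submodule k W₂) (f : W₁ →ₗ[k] W₂)
    (hZ : Z₁.map f = Z₂) (hB : ∀ z ∈ Z₁, (f z ∈ B₂ ↔ z ∈ B₁)) :
    Nonempty (↥(Z₂.map B₂.mkQ) ≃ₗ[k] ↥(Z₁.map B₁.mkQ)) := by
  let g : W₁ →ₗ[k] (W₂ ⧸ B₂) := B₂.mkQ.comp f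
  have h1 : LinearMap.ker (g.domRestrict Z₁) = LinearMap.ker (B₁.mkQ.domRestrict Z₁) := by
    ext z
    simp only [LinearMap.mem_ker, LinearMap.domRestrict_apply, LinearMap.comp_apply, g,
      Submodule.mkQ_apply, Submodule.Quotient.mk_eq_zero]
    exact hB z z.2
  have e2 := (g.domRestrict Z₁).quotKerEquivRange
  have e1 := (B₁.mkQ.domRestrict Z₁).quotKerEquivRange
  have r2 : LinearMap.range (g.domRestrict Z₁) = Z₂.map B₂.mkQ := by
    rw [LinearMap.range_domRestrict]
    show Submodule.map (B₂.mkQ.comp f) Z₁ = Z₂.map B₂.mkQ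
    rw [Submodule.map_comp, hZ]
  have r1 : LinearMap.range (B₁.mkQ.domRestrict Z₁) = Z₁.map B₁.mkQ :=
    LinearMap.range_domRestrict _ _
  exact ⟨((LinearEquiv.ofEq _ _ r2.symm).trans e2.symm).trans
    (((Submodule.quotEquivOfEq _ _ h1).trans e1).trans (LinearEquiv.ofEq _ _ r1))⟩

/-! ### Sum-of-coefficients functionals -/

noncomputable def epsF (k : Type) [Field k] (α : Type) : (α →₀ k) →ₗ[k] k :=
  Finsupp.lsum k fun _ => LinearMap.id

theorem epsF_single {k : Type} [Field k] {α : Type} (a : α) (c : k) :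
    epsF k α (Finsupp.single a c) = c := by
  simp [epsF]

theorem epsF_eq_sum {k : Type} [Field k] {α : Type} (q : α →₀ k) :
    epsF k α q = ∑ a ∈ q.support, q a := by
  rw [epsF, Finsupp.lsum_apply]
  rfl

/-! ### Boundary computations -/

theorem sBoundary_single {k : Type} [Field k] {V : Type} [LinearOrder V] (F : Finset V) (c : k) :
    sBoundary k (Finsupp.single F c) =
      c • ∑ x ∈ F, ((-1 : k) ^ (F.filter (fun y => y < x)).card) •
        Finsupp.single (F.erase x) (1 : k) := by
  rw [sBoundary, Finsupp.lsum_single, LinearMap.toSpanSingleton_apply]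

theorem sBoundary_vertex {k : Type} [Field k] {V : Type} [LinearOrder V] (x : V) (c : k) :
    sBoundary k (Finsupp.single ({x} : Finset V) c) = Finsupp.single ∅ c := by
  rw [sBoundary_single, Finset.sum_singleton]
  have h1 : ({x} : Finset V).filter (fun y => y < x) = ∅ := by
    rw [Finset.filter_eq_empty_iff]
    intro y hy
    rw [Finset.mem_singleton] at hy
    subst hy
    exact lt_irrefl y
  rw [h1, Finset.erase_singleton]
  simp [Finsupp.smul_single]

theorem sBoundary_pair {k : Type} [Field k] {V : Type} [LinearOrder V] {x y : V} (h : x < y) :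
    sBoundary k (Finsupp.single ({x, y} : Finset V) (1 : k)) =
      Finsupp.single {y} 1 - Finsupp.single {x} 1 := by
  have hne : x ≠ y := ne_of_lt h
  have hxy : x ∉ ({y} : Finset V) := by simp [hne]
  rw [sBoundary_single]
  rw [show ({x, y} : Finset V) = insert x {y} from rfl, Finset.sum_insert hxy,
    Finset.sum_singleton]
  have hfx : (insert x ({y} : Finset V)).filter (fun z => z < x) = ∅ := by
    rw [Finset.filter_eq_empty_iff]
    intro z hz
    rcases Finset.mem_insert.mp hz with rfl | hz
    · exact lt_irrefl z
    · rw [Finset.mem_singleton] at hz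
      subst hz
      exact not_lt.mpr h.le
  have hfy : (insert x ({y} : Finset V)).filter (fun z => z < y) = {x} := by
    ext z
    simp only [Finset.mem_filter, Finset.mem_insert, Finset.mem_singleton]
    constructor
    · rintro ⟨rfl | rfl, hz⟩
      · rfl
      · exact absurd hz (lt_irrefl z)
    · rintro rfl
      exact ⟨Or.inl rfl, h⟩
  have hex : (insert x ({y} : Finset V)).erase x = {y} := Finset.erase_insert hxy
  have hey : (insert x ({y} : Finset V)).erase y = {x} := by
    rw [show insert x ({y} : Finset V) = ({x, y} : Finset V) from rfl, Finset.pair_comm]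
    exact Finset.erase_insert (by simp [Ne.symm hne])
  rw [hfx, hfy, hex, hey]
  simp only [Finset.card_empty, pow_zero, one_smul, Finset.card_singleton, pow_one,
    neg_smul, one_smul, one_smul]
  rw [sub_eq_add_neg]

theorem sBoundary_on_supported {k : Type} [Field k] {V : Type} [LinearOrder V]
    {K : Set (Finset V)} {q : Finset V →₀ k}
    (hq : q ∈ Finsupp.supported k k (sFaces K 1)) :
    sBoundary k q = Finsupp.single ∅ (epsF k (Finset V) q) := by
  have key : Finsupp.supported k k (sFaces K 1) ≤
      LinearMap.ker (sBoundary k -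
        (LinearMap.toSpanSingleton k _ (Finsupp.single (∅ : Finset V) (1 : k))).comp
          (epsF k (Finset V))) := by
    rw [Finsupp.supported_eq_span_single]
    rw [Submodule.span_le]
    rintro q ⟨F, hF, rfl⟩
    obtain ⟨x, rfl⟩ := Finset.card_eq_one.mp hF.1
    simp only [SetLike.mem_coe, LinearMap.mem_ker, LinearMap.sub_apply, LinearMap.comp_apply,
      LinearMap.toSpanSingleton_apply]
    rw [sBoundary_vertex, epsF_single]
    simp
  have := key hq
  rw [LinearMap.mem_ker, LinearMap.sub_apply, sub_eq_zero] at this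
  rw [this]
  simp [LinearMap.toSpanSingleton_apply, Finsupp.smul_single]

end H0Aux

namespace H0Aux

section Main

variable {G : Type} [AddCommGroup G] (k : Type) [Field k] {r : ℕ}
variable (n : Fin r → G) (S : AddSubmonoid G)

/-- The toric algebra map. -/
noncomputable def Tm (hmem : ∀ i, n i ∈ S) :
    MvPolynomial (Fin r) k →ₐ[k] AddMonoidAlgebra k S :=
  aeval fun i : Fin r => AddMonoidAlgebra.single (⟨n i, hmem i⟩ : S) (1 : k)

/-- The `S`-degree of an exponent vector. -/
def sg (hmem : ∀ i, n i ∈ S) : (Fin r →₀ ℕ) → S :=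
  fun a => a.sum fun i e => e • (⟨n i, hmem i⟩ : S)

theorem sg_val (hmem : ∀ i, n i ∈ S) (a : Fin r →₀ ℕ) :
    ((sg n S hmem a : S) : G) = Finsupp.weight n a := by
  rw [Finsupp.weight_apply, sg, Finsupp.sum, Finsupp.sum, AddSubmonoid.coe_finset_sum]
  exact Finset.sum_congr rfl fun i _ => by push_cast; ring

theorem Tm_monomial (hmem : ∀ i, n i ∈ S) (a : Fin r →₀ ℕ) (c : k) :
    Tm k n S hmem (monomial a c) = AddMonoidAlgebra.single (sg n S hmem a) c := by
  rw [Tm, aeval_monomial, Finsupp.prod]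
  have h1 : ∀ i ∈ a.support,
      (AddMonoidAlgebra.single (⟨n i, hmem i⟩ : S) (1 : k)) ^ (a i) =
        AddMonoidAlgebra.single ((a i) • (⟨n i, hmem i⟩ : S)) 1 := fun i _ => by
    rw [AddMonoidAlgebra.single_pow, one_pow]
  rw [Finset.prod_congr rfl h1, AddMonoidAlgebra.prod_single, Finset.prod_const_one]
  have h2 : (algebraMap k (AddMonoidAlgebra k S)) c = AddMonoidAlgebra.single 0 c := by
    rw [AddMonoidAlgebra.coe_algebraMap]
    simp
  rw [h2, AddMonoidAlgebra.single_mul_single, zero_add, mul_one]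
  rfl

theorem Tm_eq_sum (hmem : ∀ i, n i ∈ S) (p : MvPolynomial (Fin r) k) :
    Tm k n S hmem p = ∑ a ∈ p.support, AddMonoidAlgebra.single (sg n S hmem a) (coeff a p) := by
  conv_lhs => rw [← support_sum_monomial_coeff p]
  rw [map_sum]
  exact Finset.sum_congr rfl fun a _ => Tm_monomial k n S hmem a _

open Classical in
theorem Tm_apply_point (hmem : ∀ i, n i ∈ S) (p : MvPolynomial (Fin r) k) (s : S) :
    (Tm k n S hmem p).coeff s = ∑ a ∈ p.support, (if sg n S hmem a = s then coeff a p else 0) := by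
  rw [Tm_eq_sum, AddMonoidAlgebra.coeff_sum, Finsupp.finset_sum_apply]
  exact Finset.sum_congr rfl fun a _ => by rw [AddMonoidAlgebra.coeff_single, Finsupp.single_apply]

/-- Sum-of-coefficients on polynomials. -/
noncomputable def epsR : MvPolynomial (Fin r) k →ₗ[k] k :=
  (aeval (R := k) (fun _ : Fin r => (1 : k))).toLinearMap

theorem epsR_monomial (a : Fin r →₀ ℕ) (c : k) : epsR (r := r) k (monomial a c) = c := by
  simp [epsR, aeval_monomial, Finsupp.prod]

theorem epsR_eq_sum (p : MvPolynomial (Fin r) k) :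
    epsR k p = ∑ a ∈ p.support, coeff a p := by
  conv_lhs => rw [← support_sum_monomial_coeff p]
  rw [map_sum]
  exact Finset.sum_congr rfl fun a _ => epsR_monomial k a _

theorem Tm_homog (hmem : ∀ i, n i ∈ S) (p : MvPolynomial (Fin r) k) (s₀ : S)
    (h : ∀ a ∈ p.support, sg n S hmem a = s₀) :
    Tm k n S hmem p = AddMonoidAlgebra.single s₀ (epsR k p) := by
  rw [Tm_eq_sum, epsR_eq_sum]
  rw [show (AddMonoidAlgebra.single s₀ (∑ a ∈ p.support, coeff a p) : AddMonoidAlgebra k S) =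
      ∑ a ∈ p.support, AddMonoidAlgebra.single s₀ (coeff a p) from
    map_sum (AddMonoidAlgebra.singleAddHom s₀) _ _]
  exact Finset.sum_congr rfl fun a ha => by rw [h a ha]

theorem mem_ker_homog (hmem : ∀ i, n i ∈ S) {m : G} {p : MvPolynomial (Fin r) k}
    (hp : p.IsWeightedHomogeneous n m) :
    Tm k n S hmem p = 0 ↔ epsR k p = 0 := by
  rcases Finset.eq_empty_or_nonempty p.support with he | ⟨a₀, ha₀⟩
  · have hp0 : p = 0 := MvPolynomial.support_eq_empty.mp he
    simp [hp0]
  · have hall : ∀ a ∈ p.support, sg n S hmem a = sg n S hmem a₀ := fun a ha =>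
      Subtype.ext (by
        rw [sg_val, sg_val, hp (MvPolynomial.mem_support_iff.mp ha),
          hp (MvPolynomial.mem_support_iff.mp ha₀)])
    rw [Tm_homog k n S hmem p _ hall]
    constructor
    · intro h
      have := AddMonoidAlgebra.single_eq_zero.mp h
      exact this
    · intro h
      rw [h]
      exact AddMonoidAlgebra.single_zero _

open Classical in
theorem component_ker (hmem : ∀ i, n i ∈ S) {p : MvPolynomial (Fin r) k}
    (hp : Tm k n S hmem p = 0) (d : G) :
    Tm k n S hmem (weightedHomogeneousComponent n d p) = 0 := by
  set q := weightedHomogeneousComponent n d p with hq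
  rcases Finset.eq_empty_or_nonempty q.support with he | ⟨a₀, ha₀⟩
  · rw [MvPolynomial.support_eq_empty.mp he]
    exact map_zero _
  · have hqh : q.IsWeightedHomogeneous n d := weightedHomogeneousComponent_isWeightedHomogeneous d p
    have hwa₀ : Finsupp.weight n a₀ = d := hqh (MvPolynomial.mem_support_iff.mp ha₀)
    have hall : ∀ a ∈ q.support, sg n S hmem a = sg n S hmem a₀ := fun a ha =>
      Subtype.ext (by
        rw [sg_val, sg_val, hqh (MvPolynomial.mem_support_iff.mp ha), hwa₀])
    rw [Tm_homog k n S hmem q _ hall]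
    suffices hε : epsR k q = 0 by
      rw [hε]
      exact AddMonoidAlgebra.single_zero _
    have hsg_iff : ∀ a : Fin r →₀ ℕ, sg n S hmem a = sg n S hmem a₀ ↔ Finsupp.weight n a = d := by
      intro a
      constructor
      · intro h
        have := congrArg (fun x : S => (x : G)) h
        simpa [sg_val, hwa₀] using this
      · intro h
        exact Subtype.ext (by rw [sg_val, sg_val, h, hwa₀])
    have h2 : q.support = p.support.filter (fun a => sg n S hmem a = sg n S hmem a₀) := by
      ext a
      simp only [Finset.mem_filter, MvPolynomial.mem_support_iff, hq,
        coeff_weightedHomogeneousComponent, hsg_iff]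
      constructor
      · intro h
        by_cases hw : Finsupp.weight n a = d
        · rw [if_pos hw] at h
          exact ⟨h, hw⟩
        · rw [if_neg hw] at h
          exact absurd rfl h
      · rintro ⟨hpa, hw⟩
        rw [if_pos hw]
        exact hpa
    have h1 : epsR k q = ∑ a ∈ q.support, coeff a p := by
      rw [epsR_eq_sum]
      refine Finset.sum_congr rfl fun a ha => ?_
      have hw : Finsupp.weight n a = d := hqh (MvPolynomial.mem_support_iff.mp ha)
      rw [hq, coeff_weightedHomogeneousComponent, if_pos hw]
    rw [h1, h2, Finset.sum_filter, ← Tm_apply_point k n S hmem p (sg n S hmem a₀), hp]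
    rfl

end Main

end H0Aux

namespace H0Aux

section Main2

variable {G : Type} (k : Type) [Field k] [AddCommGroup G] {r : ℕ}
variable (n : Fin r → G) (S : AddSubmonoid G)

/-- The edge relation. -/
def RelE (m : G) (a b : Fin r →₀ ℕ) : Prop :=
  Finsupp.weight n a = m ∧ Finsupp.weight n b = m ∧ ∃ i, a i ≠ 0 ∧ b i ≠ 0

/-- Differences of monomials along edges. -/
def Dedge (m : G) : Set (MvPolynomial (Fin r) k) :=
  {q | ∃ a b, RelE n m a b ∧ q = monomial a 1 - monomial b 1}

theorem weight_single (i : Fin r) : Finsupp.weight n (Finsupp.single i 1) = n i := by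
  rw [Finsupp.weight_apply, Finsupp.sum_single_index]
  · rw [one_smul]
  · rw [zero_smul]

theorem edge_sub_mem (hmem : ∀ i, n i ∈ S) {m : G} {a b : Fin r →₀ ℕ} (h : RelE n m a b) :
    monomial a (1 : k) - monomial b 1 ∈
      (Ideal.span (Set.range (X : Fin r → MvPolynomial (Fin r) k)) *
        RingHom.ker (Tm k n S hmem).toRingHom) := by
  obtain ⟨ha, hb, i, hai, hbi⟩ := h
  set e : Fin r →₀ ℕ := Finsupp.single i 1 with he
  have hae : a - e + e = a :=
    tsub_add_cancel_of_le (Finsupp.single_le_iff.mpr (Nat.one_le_iff_ne_zero.mpr hai))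
  have hbe : b - e + e = b :=
    tsub_add_cancel_of_le (Finsupp.single_le_iff.mpr (Nat.one_le_iff_ne_zero.mpr hbi))
  have hX : (X i : MvPolynomial (Fin r) k) = monomial e 1 := rfl
  have hxa : (X i : MvPolynomial (Fin r) k) * monomial (a - e) 1 = monomial a 1 := by
    rw [hX, monomial_mul, one_mul, add_comm e (a - e), hae]
  have hxb : (X i : MvPolynomial (Fin r) k) * monomial (b - e) 1 = monomial b 1 := by
    rw [hX, monomial_mul, one_mul, add_comm e (b - e), hbe]
  have hker : monomial (a - e) (1 : k) - monomial (b - e) 1 ∈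
      RingHom.ker (Tm k n S hmem).toRingHom := by
    rw [RingHom.mem_ker]
    show Tm k n S hmem (monomial (a - e) 1 - monomial (b - e) 1) = 0
    rw [map_sub, Tm_monomial, Tm_monomial]
    have hsg : sg n S hmem (a - e) = sg n S hmem (b - e) := by
      apply Subtype.ext
      rw [sg_val, sg_val]
      have h1 : Finsupp.weight n (a - e) + Finsupp.weight n e = m := by
        rw [← map_add, hae, ha]
      have h2 : Finsupp.weight n (b - e) + Finsupp.weight n e = m := by
        rw [← map_add, hbe, hb]
      exact add_right_cancel (h1.trans h2.symm)
    rw [hsg, sub_self]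
  have : monomial a (1 : k) - monomial b 1 =
      (X i : MvPolynomial (Fin r) k) * (monomial (a - e) 1 - monomial (b - e) 1) := by
    rw [mul_sub, hxa, hxb]
  rw [this]
  exact Ideal.mul_mem_mul (Ideal.subset_span ⟨i, rfl⟩) hker

theorem mul_le_spanU (I : Ideal (MvPolynomial (Fin r) k)) :
    ∀ p ∈ (Ideal.span (Set.range (X : Fin r → MvPolynomial (Fin r) k)) * I),
      p ∈ Submodule.span k {q : MvPolynomial (Fin r) k |
        ∃ (i : Fin r) (f : MvPolynomial (Fin r) k), f ∈ I ∧ q = X i * f} := by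
  intro p hp
  refine Submodule.mul_induction_on hp ?_ (fun x y hx hy => Submodule.add_mem _ hx hy)
  intro a ha b hb
  revert b
  induction ha using Submodule.span_induction with
  | mem x h =>
    obtain ⟨i, rfl⟩ := h
    intro b hb
    exact Submodule.subset_span ⟨i, b, hb, rfl⟩
  | zero =>
    intro b hb
    rw [zero_mul]
    exact Submodule.zero_mem _
  | add x y hx hy ihx ihy =>
    intro b hb
    rw [add_mul]
    exact Submodule.add_mem _ (ihx b hb) (ihy b hb)
  | smul r x hx ih =>
    intro b hb
    have h1 : r • x * b = x * (r * b) := by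
      rw [smul_eq_mul]
      ring
    rw [h1]
    exact ih (r * b) (I.mul_mem_left r hb)

theorem component_X_mul (i : Fin r) (f : MvPolynomial (Fin r) k) (m : G) :
    weightedHomogeneousComponent n m (X i * f) =
      X i * weightedHomogeneousComponent n (m - n i) f := by
  classical
  apply MvPolynomial.ext
  intro a
  rw [coeff_weightedHomogeneousComponent, mul_comm (X i) f, mul_comm (X i) _,
    MvPolynomial.coeff_mul_X', MvPolynomial.coeff_mul_X']
  by_cases hi : i ∈ a.support
  · rw [if_pos hi, if_pos hi, coeff_weightedHomogeneousComponent]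
    have hsum : a - Finsupp.single i 1 + Finsupp.single i 1 = a :=
      tsub_add_cancel_of_le (Finsupp.single_le_iff.mpr
        (Nat.one_le_iff_ne_zero.mpr (Finsupp.mem_support_iff.mp hi)))
    have hw : Finsupp.weight n a = Finsupp.weight n (a - Finsupp.single i 1) + n i := by
      conv_lhs => rw [← hsum]
      rw [map_add, weight_single]
    rw [hw]
    by_cases hc : Finsupp.weight n (a - Finsupp.single i 1) = m - n i
    · rw [if_pos hc, if_pos (by rw [hc, sub_add_cancel])]
    · rw [if_neg hc, if_neg (fun habs => hc (by rw [eq_sub_iff_add_eq]; exact habs))]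
  · rw [if_neg hi, if_neg hi, ite_self]

open Classical in
theorem mISm_le_span (hmem : ∀ i, n i ∈ S) (m : G) :
    (Ideal.span (Set.range (X : Fin r → MvPolynomial (Fin r) k)) *
        RingHom.ker (Tm k n S hmem).toRingHom).restrictScalars k ⊓
      weightedHomogeneousSubmodule k n m ≤ Submodule.span k (Dedge k n m) := by
  rintro p ⟨hp1, hp2⟩
  have h1 : p ∈ Submodule.span k {q : MvPolynomial (Fin r) k |
      ∃ (i : Fin r) (f : MvPolynomial (Fin r) k),
        f ∈ RingHom.ker (Tm k n S hmem).toRingHom ∧ q = X i * f} :=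
    mul_le_spanU k _ p hp1
  have hpc : weightedHomogeneousComponent n m p = p :=
    (weightedHomogeneousComponent_of_mem hp2).trans (if_pos rfl)
  have h2 : p ∈ Submodule.map (weightedHomogeneousComponent n m)
      (Submodule.span k {q : MvPolynomial (Fin r) k |
        ∃ (i : Fin r) (f : MvPolynomial (Fin r) k),
          f ∈ RingHom.ker (Tm k n S hmem).toRingHom ∧ q = X i * f}) := by
    rw [← hpc]
    exact Submodule.mem_map_of_mem h1
  rw [Submodule.map_span] at h2
  refine Submodule.span_le.mpr ?_ h2
  rintro q ⟨q', ⟨i, f, hf, rfl⟩, rfl⟩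
  simp only [SetLike.mem_coe]
  rw [component_X_mul]
  set g := weightedHomogeneousComponent n (m - n i) f with hg
  have hg_ker : Tm k n S hmem g = 0 := component_ker k n S hmem (RingHom.mem_ker.mp hf) (m - n i)
  have hg_hom : g.IsWeightedHomogeneous n (m - n i) :=
    weightedHomogeneousComponent_isWeightedHomogeneous (m - n i) f
  have hge : epsR k g = 0 := (mem_ker_homog k n S hmem hg_hom).mp hg_ker
  rcases Finset.eq_empty_or_nonempty g.support with he | ⟨a₀, ha₀⟩
  · rw [MvPolynomial.support_eq_empty.mp he, mul_zero]
    exact Submodule.zero_mem _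
  · have hrep : (X i : MvPolynomial (Fin r) k) * g =
        ∑ a ∈ g.support, coeff a g • monomial (a + Finsupp.single i 1) 1 := by
      conv_lhs => rw [← support_sum_monomial_coeff g]
      rw [Finset.mul_sum]
      refine Finset.sum_congr rfl fun a _ => ?_
      rw [show (X i : MvPolynomial (Fin r) k) = monomial (Finsupp.single i 1) 1 from rfl,
        monomial_mul, one_mul, smul_monomial, smul_eq_mul, mul_one, add_comm]
    rw [hrep]
    refine sub_sum_mem _ _ _ _ ?_ a₀ ?_
    · rw [← epsR_eq_sum]
      exact hge
    · intro a ha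
      refine Submodule.subset_span ⟨a + Finsupp.single i 1, a₀ + Finsupp.single i 1,
        ⟨?_, ?_, i, ?_, ?_⟩, rfl⟩
      · rw [map_add, weight_single, hg_hom (MvPolynomial.mem_support_iff.mp ha), sub_add_cancel]
      · rw [map_add, weight_single, hg_hom (MvPolynomial.mem_support_iff.mp ha₀), sub_add_cancel]
      · simp [Finsupp.add_apply, Finsupp.single_apply]
      · simp [Finsupp.add_apply, Finsupp.single_apply]

theorem span_le_mISm (hmem : ∀ i, n i ∈ S) (m : G) :
    Submodule.span k (Dedge k n m) ≤
      (Ideal.span (Set.range (X : Fin r → MvPolynomial (Fin r) k)) *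
          RingHom.ker (Tm k n S hmem).toRingHom).restrictScalars k ⊓
        weightedHomogeneousSubmodule k n m := by
  rw [Submodule.span_le]
  rintro q ⟨a, b, hrel, rfl⟩
  refine ⟨edge_sub_mem k n S hmem hrel, ?_⟩
  exact Submodule.sub_mem _
    ((mem_weightedHomogeneousSubmodule k n m _).mpr
      (isWeightedHomogeneous_monomial n a 1 hrel.1))
    ((mem_weightedHomogeneousSubmodule k n m _).mpr
      (isWeightedHomogeneous_monomial n b 1 hrel.2.1))

theorem mISm_eq_span (hmem : ∀ i, n i ∈ S) (m : G) :
    (Ideal.span (Set.range (X : Fin r → MvPolynomial (Fin r) k)) *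
        RingHom.ker (Tm k n S hmem).toRingHom).restrictScalars k ⊓
      weightedHomogeneousSubmodule k n m = Submodule.span k (Dedge k n m) :=
  le_antisymm (mISm_le_span k n S hmem m) (span_le_mISm k n S hmem m)

theorem mem_ISm_iff (hmem : ∀ i, n i ∈ S) (m : G) (p : MvPolynomial (Fin r) k) :
    p ∈ (RingHom.ker (Tm k n S hmem).toRingHom).restrictScalars k ⊓
        weightedHomogeneousSubmodule k n m ↔
      p.IsWeightedHomogeneous n m ∧ epsR k p = 0 := by
  constructor
  · rintro ⟨h1, h2⟩
    have hh := (mem_weightedHomogeneousSubmodule k n m p).mp h2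
    exact ⟨hh, (mem_ker_homog k n S hmem hh).mp (RingHom.mem_ker.mp h1)⟩
  · rintro ⟨h1, h2⟩
    exact ⟨RingHom.mem_ker.mpr ((mem_ker_homog k n S hmem h1).mpr h2),
      (mem_weightedHomogeneousSubmodule k n m p).mpr h1⟩

end Main2

end H0Aux

namespace H0Aux

section PairF

variable {k : Type} [Field k] {V : Type} [LinearOrder V]

/-- pair finset with a pinned `DecidableEq` instance -/
def pairF (x y : V) : Finset V := {x, y}

theorem mem_pairF {x y z : V} : z ∈ pairF x y ↔ z = x ∨ z = y := by
  rw [pairF]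
  simp

theorem pairF_comm (x y : V) : pairF x y = pairF y x := by
  ext z
  rw [mem_pairF, mem_pairF, or_comm]

theorem card_pairF {x y : V} (h : x ≠ y) : (pairF x y).card = 2 := by
  rw [pairF]
  rw [Finset.card_insert_of_notMem (by simp [h]), Finset.card_singleton]

theorem sBoundary_pairF {x y : V} (h : x < y) :
    sBoundary k (Finsupp.single (pairF x y) (1 : k)) =
      Finsupp.single {y} 1 - Finsupp.single {x} 1 := by
  rw [show pairF x y = ({x, y} : Finset V) from rfl]
  exact sBoundary_pair h

end PairF

section Main3

variable {G : Type} (k : Type) [Field k] [AddCommGroup G] {r : ℕ}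
variable (n : Fin r → G) (S : AddSubmonoid G)

/-- vertex map -/
def iot (a : Fin r →₀ ℕ) : Finset (Lex (Fin r →₀ ℕ)) := {toLex a}

theorem iot_inj {a b : Fin r →₀ ℕ} (h : iot a = iot b) : a = b := by
  have := Finset.singleton_injective h
  exact toLex.injective this

/-- The comparison map from polynomials to simplicial chains. -/
noncomputable def fm : MvPolynomial (Fin r) k →ₗ[k] (Finset (Lex (Fin r →₀ ℕ)) →₀ k) :=
  (MvPolynomial.basisMonomials (Fin r) k).constr k fun a => Finsupp.single (iot a) 1

theorem fm_monomial_one (a : Fin r →₀ ℕ) :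
    fm k (monomial a (1 : k)) = Finsupp.single (iot a) 1 := by
  have := (MvPolynomial.basisMonomials (Fin r) k).constr_basis k
    (fun a => Finsupp.single (iot a) (1 : k)) a
  rw [show ((MvPolynomial.basisMonomials (Fin r) k) a) = monomial a 1 from
    congrFun (MvPolynomial.coe_basisMonomials (Fin r) k) a] at this
  exact this

theorem fm_monomial (a : Fin r →₀ ℕ) (c : k) :
    fm k (monomial a c) = c • Finsupp.single (iot a) 1 := by
  have h : monomial a c = c • monomial a (1 : k) := by
    rw [smul_monomial, smul_eq_mul, mul_one]
  rw [h, map_smul, fm_monomial_one]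

theorem fm_sub_monomial (a b : Fin r →₀ ℕ) :
    fm k (monomial a (1 : k) - monomial b 1) =
      Finsupp.single (iot a) 1 - Finsupp.single (iot b) 1 := by
  rw [map_sub, fm_monomial_one, fm_monomial_one]

theorem fm_coeff (p : MvPolynomial (Fin r) k) (a : Fin r →₀ ℕ) :
    (fm k p) (iot a) = coeff a p := by
  have hcomp : (Finsupp.lapply (iot a)).comp (fm k) = MvPolynomial.lcoeff k a := by
    apply (MvPolynomial.basisMonomials (Fin r) k).ext
    intro b
    rw [show ((MvPolynomial.basisMonomials (Fin r) k) b) = monomial b 1 from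
      congrFun (MvPolynomial.coe_basisMonomials (Fin r) k) b]
    rw [LinearMap.comp_apply, fm_monomial_one]
    show (Finsupp.single (iot b) (1 : k)) (iot a) = MvPolynomial.lcoeff k a (monomial b 1)
    rw [MvPolynomial.lcoeff_apply, coeff_monomial, Finsupp.single_apply]
    by_cases h : b = a
    · subst h
      rw [if_pos rfl, if_pos rfl]
    · rw [if_neg (fun habs => h (iot_inj habs)), if_neg h]
  exact LinearMap.congr_fun hcomp p

theorem fm_inj : Function.Injective (fm k (r := r)) := by
  have h : LinearMap.ker (fm k (r := r)) = ⊥ := by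
    rw [LinearMap.ker_eq_bot']
    intro p hp
    apply MvPolynomial.ext
    intro a
    rw [← fm_coeff k p a, hp]
    simp
  exact LinearMap.ker_eq_bot.mp h

theorem epsF_fm (p : MvPolynomial (Fin r) k) :
    epsF k (Finset (Lex (Fin r →₀ ℕ))) (fm k p) = epsR k p := by
  have hcomp : (epsF k (Finset (Lex (Fin r →₀ ℕ)))).comp (fm k) = epsR k := by
    apply (MvPolynomial.basisMonomials (Fin r) k).ext
    intro b
    rw [show ((MvPolynomial.basisMonomials (Fin r) k) b) = monomial b 1 from
      congrFun (MvPolynomial.coe_basisMonomials (Fin r) k) b]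
    rw [LinearMap.comp_apply, fm_monomial_one, epsF_single, epsR_monomial]
  exact LinearMap.congr_fun hcomp p

theorem fm_supported {A : Set (Fin r →₀ ℕ)} {p : MvPolynomial (Fin r) k}
    (hp : ∀ a ∈ p.support, a ∈ A) :
    fm k p ∈ Finsupp.supported k k (iot '' A) := by
  have hrep : fm k p = ∑ a ∈ p.support, fm k (monomial a (coeff a p)) := by
    rw [← map_sum]
    congr 1
    exact (support_sum_monomial_coeff p).symm
  rw [hrep]
  refine Submodule.sum_mem _ fun a ha => ?_
  rw [fm_monomial]
  exact Submodule.smul_mem _ _ (Finsupp.single_mem_supported k 1 ⟨a, hp a ha, rfl⟩)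

theorem mem_C_ne_zero {m : G} (hm0 : m ≠ 0) {a : Fin r →₀ ℕ}
    (ha : Finsupp.weight n a = m) : ∃ i, a i ≠ 0 := by
  by_contra h
  push_neg at h
  have ha0 : a = 0 := Finsupp.ext fun i => h i
  rw [ha0, map_zero] at ha
  exact hm0 ha.symm

theorem S1_eq {m : G} (hm0 : m ≠ 0) :
    sFaces (nablaLex n m) 1 = iot '' {a : Fin r →₀ ℕ | Finsupp.weight n a = m} := by
  ext F
  constructor
  · rintro ⟨hcard, hF⟩
    rcases hF with rfl | hF
    · simp at hcard
    obtain ⟨x, rfl⟩ := Finset.card_eq_one.mp hcard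
    refine ⟨ofLex x, ?_, ?_⟩
    · exact hF.2.1 x (Finset.mem_singleton_self x)
    · rw [iot]
      rfl
  · rintro ⟨a, ha, rfl⟩
    rw [iot]
    refine ⟨Finset.card_singleton _, Or.inr ⟨⟨toLex a, Finset.mem_singleton_self _⟩, ?_, ?_⟩⟩
    · intro x hx
      rw [Finset.mem_singleton] at hx
      subst hx
      exact ha
    · obtain ⟨i, hi⟩ := mem_C_ne_zero n hm0 ha
      refine ⟨i, fun x hx => ?_⟩
      rw [Finset.mem_singleton] at hx
      subst hx
      exact Nat.pos_of_ne_zero hi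

/-- edge chains -/
def Eset (m : G) : Set (Finset (Lex (Fin r →₀ ℕ)) →₀ k) :=
  {q | ∃ a b, RelE n m a b ∧ q = Finsupp.single (iot a) 1 - Finsupp.single (iot b) 1}

theorem B_eq_span (m : G) :
    sBoundaries k (nablaLex n m) 0 = Submodule.span k (Eset k n m) := by
  rw [sBoundaries, Finsupp.supported_eq_span_single, Submodule.map_span]
  apply le_antisymm
  · rw [Submodule.span_le]
    rintro q ⟨q', ⟨F, hF, rfl⟩, rfl⟩
    obtain ⟨hcard, hF2⟩ := hF
    rcases hF2 with rfl | hF2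
    · simp at hcard
    obtain ⟨x, y, hxy, hFxy⟩ := Finset.card_eq_two.mp hcard
    have hFp : F = pairF x y := by
      rw [hFxy]
      ext z
      rw [mem_pairF]
      simp
    subst hFp
    obtain ⟨-, hsum, i, hpos⟩ := hF2
    have hxm : x ∈ pairF x y := mem_pairF.mpr (Or.inl rfl)
    have hym : y ∈ pairF x y := mem_pairF.mpr (Or.inr rfl)
    have hx : Finsupp.weight n (ofLex x) = m := hsum x hxm
    have hy : Finsupp.weight n (ofLex y) = m := hsum y hym
    have hxi : (ofLex x) i ≠ 0 := Nat.pos_iff_ne_zero.mp (hpos x hxm)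
    have hyi : (ofLex y) i ≠ 0 := Nat.pos_iff_ne_zero.mp (hpos y hym)
    show sBoundary k (Finsupp.single (pairF x y) (1 : k)) ∈ _
    rcases lt_or_gt_of_ne hxy with h | h
    · rw [sBoundary_pairF h]
      exact Submodule.subset_span
        ⟨ofLex y, ofLex x, ⟨hy, hx, i, hyi, hxi⟩, by rw [iot, iot]; rfl⟩
    · rw [pairF_comm, sBoundary_pairF h]
      exact Submodule.subset_span
        ⟨ofLex x, ofLex y, ⟨hx, hy, i, hxi, hyi⟩, by rw [iot, iot]; rfl⟩
  · rw [Submodule.span_le]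
    rintro q ⟨a, b, hrel, rfl⟩
    by_cases hab : a = b
    · subst hab
      rw [sub_self]
      exact Submodule.zero_mem _
    obtain ⟨ha, hb, i, hai, hbi⟩ := hrel
    have hne : toLex a ≠ toLex b := fun h => hab (toLex.injective h)
    have hface : pairF (toLex a) (toLex b) ∈ sFaces (nablaLex n m) 2 := by
      refine ⟨card_pairF hne, Or.inr ⟨⟨toLex a, mem_pairF.mpr (Or.inl rfl)⟩, ?_, i, ?_⟩⟩
      · intro x hx
        rcases mem_pairF.mp hx with h' | h'
        · subst h'
          exact ha
        · subst h'
          exact hb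
      · intro x hx
        rcases mem_pairF.mp hx with h' | h'
        · subst h'
          exact Nat.pos_of_ne_zero hai
        · subst h'
          exact Nat.pos_of_ne_zero hbi
    have hmem' : Finsupp.single (pairF (toLex a) (toLex b)) (1 : k) ∈
        (fun i => Finsupp.single i (1:k)) '' (sFaces (nablaLex n m) 2) := ⟨_, hface, rfl⟩
    rcases lt_or_gt_of_ne hne with h | h
    · have hb1 : Finsupp.single (iot b) (1:k) - Finsupp.single (iot a) 1 ∈
          Submodule.span k ((sBoundary k) '' ((fun i => Finsupp.single i (1:k)) ''
            (sFaces (nablaLex n m) 2))) := by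
        apply Submodule.subset_span
        refine ⟨_, hmem', ?_⟩
        rw [sBoundary_pairF h, iot, iot]
      have := Submodule.neg_mem _ hb1
      rwa [neg_sub] at this
    · apply Submodule.subset_span
      refine ⟨_, hmem', ?_⟩
      rw [pairF_comm, sBoundary_pairF h, iot, iot]

theorem cycles_char (hmem : ∀ i, n i ∈ S) {m : G} (hm0 : m ≠ 0) :
    Submodule.map (fm k)
      ((RingHom.ker (Tm k n S hmem).toRingHom).restrictScalars k ⊓
        weightedHomogeneousSubmodule k n m) = sCycles k (nablaLex n m) 0 := by
  apply le_antisymm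
  · rintro _ ⟨p, hp, rfl⟩
    obtain ⟨hh, he⟩ := (mem_ISm_iff k n S hmem m p).mp hp
    have hsupp : fm k p ∈ Finsupp.supported k k (sFaces (nablaLex n m) (0 + 1)) := by
      rw [show (0 + 1 : ℕ) = 1 from rfl, S1_eq n hm0]
      exact fm_supported k fun a ha => hh (MvPolynomial.mem_support_iff.mp ha)
    refine ⟨hsupp, ?_⟩
    show sBoundary k ((fm k) p) = 0
    rw [sBoundary_on_supported hsupp, epsF_fm, he]
    exact Finsupp.single_zero _
  · intro q hq
    obtain ⟨hq1, hq2⟩ := hq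
    have hq2' : sBoundary k q = 0 := hq2
    rcases Finset.eq_empty_or_nonempty q.support with he | ⟨F₀, hF₀⟩
    · have hq0 : q = 0 := Finsupp.support_eq_empty.mp he
      rw [hq0]
      exact Submodule.zero_mem _
    · have hq0 : epsF k (Finset (Lex (Fin r →₀ ℕ))) q = 0 := by
        rw [sBoundary_on_supported hq1] at hq2'
        exact Finsupp.single_eq_zero.mp hq2'
      have hrep : q = ∑ F ∈ q.support, q F • Finsupp.single F 1 := by
        conv_lhs => rw [← Finsupp.sum_single q]
        rw [Finsupp.sum]
        exact Finset.sum_congr rfl fun F _ => by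
          rw [Finsupp.smul_single, smul_eq_mul, mul_one]
      rw [hrep]
      refine sub_sum_mem _ _ _ _ ?_ F₀ ?_
      · rw [← epsF_eq_sum]
        exact hq0
      · intro F hF
        have hsub := (Finsupp.mem_supported k q).mp hq1
        have h1 : F ∈ sFaces (nablaLex n m) 1 := hsub hF
        have h0 : F₀ ∈ sFaces (nablaLex n m) 1 := hsub hF₀
        rw [S1_eq n hm0] at h1 h0
        obtain ⟨a, ha, rfl⟩ := h1
        obtain ⟨a₀, ha₀, rfl⟩ := h0
        refine ⟨monomial a 1 - monomial a₀ 1, ?_, fm_sub_monomial k a a₀⟩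
        refine (mem_ISm_iff k n S hmem m _).mpr ⟨?_, ?_⟩
        · have := Submodule.sub_mem (weightedHomogeneousSubmodule k n m)
            ((mem_weightedHomogeneousSubmodule k n m _).mpr
              (isWeightedHomogeneous_monomial n a 1 ha))
            ((mem_weightedHomogeneousSubmodule k n m _).mpr
              (isWeightedHomogeneous_monomial n a₀ 1 ha₀))
          exact (mem_weightedHomogeneousSubmodule k n m _).mp this
        · rw [map_sub, epsR_monomial, epsR_monomial, sub_self]

theorem fm_bdry_iff (hmem : ∀ i, n i ∈ S) (m : G) (p : MvPolynomial (Fin r) k) :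
    fm k p ∈ sBoundaries k (nablaLex n m) 0 ↔
      p ∈ (Ideal.span (Set.range (X : Fin r → MvPolynomial (Fin r) k)) *
          RingHom.ker (Tm k n S hmem).toRingHom).restrictScalars k ⊓
        weightedHomogeneousSubmodule k n m := by
  rw [B_eq_span, mISm_eq_span k n S hmem m]
  constructor
  · intro h
    have himg : Submodule.span k (Eset k n m) ≤
        Submodule.map (fm k) (Submodule.span k (Dedge k n m)) := by
      rw [Submodule.map_span]
      apply Submodule.span_mono
      rintro q ⟨a, b, hrel, rfl⟩
      exact ⟨monomial a 1 - monomial b 1, ⟨a, b, hrel, rfl⟩, fm_sub_monomial k a b⟩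
    obtain ⟨p', hp', heq⟩ := himg h
    rwa [← fm_inj k heq]
  · intro h
    have himg : Submodule.map (fm k) (Submodule.span k (Dedge k n m)) ≤
        Submodule.span k (Eset k n m) := by
      rw [Submodule.map_span]
      apply Submodule.span_mono
      rintro _ ⟨q, ⟨a, b, hrel, rfl⟩, rfl⟩
      exact ⟨a, b, hrel, fm_sub_monomial k a b⟩
    exact himg ⟨p, h, rfl⟩

theorem conn_imp_eq (hmem : ∀ i, n i ∈ S) (m : G)
    (hconn : ∀ a, Finsupp.weight n a = m → ∀ b, Finsupp.weight n b = m →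
      Relation.ReflTransGen (RelE n m) a b) :
    (RingHom.ker (Tm k n S hmem).toRingHom).restrictScalars k ⊓
        weightedHomogeneousSubmodule k n m =
      (Ideal.span (Set.range (X : Fin r → MvPolynomial (Fin r) k)) *
          RingHom.ker (Tm k n S hmem).toRingHom).restrictScalars k ⊓
        weightedHomogeneousSubmodule k n m := by
  apply le_antisymm
  · intro p hp
    obtain ⟨hh, he⟩ := (mem_ISm_iff k n S hmem m p).mp hp
    rcases Finset.eq_empty_or_nonempty p.support with hemp | ⟨a₀, ha₀⟩
    · rw [MvPolynomial.support_eq_empty.mp hemp]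
      exact Submodule.zero_mem _
    · have hrep : p = ∑ a ∈ p.support, coeff a p • monomial a 1 := by
        conv_lhs => rw [← support_sum_monomial_coeff p]
        exact Finset.sum_congr rfl fun a _ => by
          rw [smul_monomial, smul_eq_mul, mul_one]
      rw [hrep]
      refine sub_sum_mem _ _ _ _ ?_ a₀ ?_
      · rw [← epsR_eq_sum]
        exact he
      · intro a ha
        have hreach := hconn a (hh (MvPolynomial.mem_support_iff.mp ha)) a₀
          (hh (MvPolynomial.mem_support_iff.mp ha₀))
        clear ha ha₀ hrep
        induction hreach with
        | refl =>
          rw [sub_self]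
          exact Submodule.zero_mem _
        | tail hab hbc ih =>
          have h2 := span_le_mISm k n S hmem m (Submodule.subset_span ⟨_, _, hbc, rfl⟩)
          have h3 := Submodule.add_mem _ ih h2
          rwa [sub_add_sub_cancel] at h3
  · rintro p ⟨h1, h2⟩
    exact ⟨Ideal.mul_le_right h1, h2⟩

open Classical in
theorem disconn_imp_ne (hmem : ∀ i, n i ∈ S) (m : G)
    {α₀ β₀ : Fin r →₀ ℕ} (hα₀ : Finsupp.weight n α₀ = m) (hβ₀ : Finsupp.weight n β₀ = m)
    (hnr : ¬ Relation.ReflTransGen (RelE n m) α₀ β₀) :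
    (RingHom.ker (Tm k n S hmem).toRingHom).restrictScalars k ⊓
        weightedHomogeneousSubmodule k n m ≠
      (Ideal.span (Set.range (X : Fin r → MvPolynomial (Fin r) k)) *
          RingHom.ker (Tm k n S hmem).toRingHom).restrictScalars k ⊓
        weightedHomogeneousSubmodule k n m := by
  set p : MvPolynomial (Fin r) k := monomial α₀ 1 - monomial β₀ 1 with hpdef
  have hp : p ∈ (RingHom.ker (Tm k n S hmem).toRingHom).restrictScalars k ⊓
      weightedHomogeneousSubmodule k n m := by
    refine (mem_ISm_iff k n S hmem m p).mpr ⟨?_, ?_⟩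
    · have := Submodule.sub_mem (weightedHomogeneousSubmodule k n m)
        ((mem_weightedHomogeneousSubmodule k n m _).mpr
          (isWeightedHomogeneous_monomial n α₀ 1 hα₀))
        ((mem_weightedHomogeneousSubmodule k n m _).mpr
          (isWeightedHomogeneous_monomial n β₀ 1 hβ₀))
      exact (mem_weightedHomogeneousSubmodule k n m _).mp this
    · rw [hpdef, map_sub, epsR_monomial, epsR_monomial, sub_self]
  have hpn : p ∉ (Ideal.span (Set.range (X : Fin r → MvPolynomial (Fin r) k)) *
      RingHom.ker (Tm k n S hmem).toRingHom).restrictScalars k ⊓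
        weightedHomogeneousSubmodule k n m := by
    rw [mISm_eq_span k n S hmem m]
    intro hmem'
    set w : (Fin r →₀ ℕ) → k := fun a =>
      if Relation.ReflTransGen (RelE n m) α₀ a then 1 else 0 with hw
    set lam := (MvPolynomial.basisMonomials (Fin r) k).constr k w with hlam
    have hlam_mon : ∀ a : Fin r →₀ ℕ, lam (monomial a 1) = w a := by
      intro a
      have := (MvPolynomial.basisMonomials (Fin r) k).constr_basis k w a
      rw [show ((MvPolynomial.basisMonomials (Fin r) k) a) = monomial a 1 from
        congrFun (MvPolynomial.coe_basisMonomials (Fin r) k) a] at this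
      exact this
    have hlam0 : Submodule.span k (Dedge k n m) ≤ LinearMap.ker lam := by
      rw [Submodule.span_le]
      rintro q ⟨a, b, hrel, rfl⟩
      rw [SetLike.mem_coe, LinearMap.mem_ker, map_sub, hlam_mon, hlam_mon]
      have hsymm : RelE n m b a := ⟨hrel.2.1, hrel.1, by
        obtain ⟨i, h1, h2⟩ := hrel.2.2
        exact ⟨i, h2, h1⟩⟩
      have hiff : Relation.ReflTransGen (RelE n m) α₀ a ↔
          Relation.ReflTransGen (RelE n m) α₀ b :=
        ⟨fun h => h.tail hrel, fun h => h.tail hsymm⟩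
      rw [hw]
      simp only [hiff]
      rw [sub_self]
    have hlamp : lam p = 0 := hlam0 hmem'
    rw [hpdef, map_sub, hlam_mon, hlam_mon, hw] at hlamp
    simp only [if_pos (Relation.ReflTransGen.refl), if_neg hnr] at hlamp
    rw [sub_zero] at hlamp
    exact one_ne_zero hlamp
  intro heq
  rw [heq] at hp
  exact hpn hp

theorem weight_eq_zero_imp (hmem : ∀ i, n i ∈ S) (hcf : ∀ g ∈ S, -g ∈ S → g = 0)
    (hn : ∀ i, n i ≠ 0) {a : Fin r →₀ ℕ} (ha : Finsupp.weight n a = 0) : a = 0 := by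
  ext i
  rw [Finsupp.coe_zero, Pi.zero_apply]
  by_contra hi
  have him : i ∈ a.support := Finsupp.mem_support_iff.mpr hi
  have hsplit : a i • n i + ∑ j ∈ a.support.erase i, a j • n j = 0 := by
    rw [Finset.add_sum_erase _ (fun j => a j • n j) him]
    rw [Finsupp.weight_apply, Finsupp.sum] at ha
    exact ha
  have hmem1 : a i • n i ∈ S := AddSubmonoid.nsmul_mem S (hmem i) _
  have hmem2 : ∑ j ∈ a.support.erase i, a j • n j ∈ S :=
    AddSubmonoid.sum_mem S fun j _ => AddSubmonoid.nsmul_mem S (hmem j) _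
  have h1 : a i • n i = 0 := by
    apply hcf _ hmem1
    rw [neg_eq_of_add_eq_zero_right hsplit]
    exact hmem2
  have h2 : n i + (a i - 1) • n i = 0 := by
    have heq : a i • n i = n i + (a i - 1) • n i := by
      conv_lhs => rw [show a i = 1 + (a i - 1) from
        (Nat.add_sub_cancel' (Nat.one_le_iff_ne_zero.mpr hi)).symm]
      rw [add_smul, one_smul]
    rw [← heq]
    exact h1
  have h3 : n i = 0 := by
    apply hcf _ (hmem i)
    rw [neg_eq_of_add_eq_zero_right h2]
    exact AddSubmonoid.nsmul_mem S (hmem i) _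
  exact hn i h3

theorem ISm_bot (hmem : ∀ i, n i ∈ S) (hcf : ∀ g ∈ S, -g ∈ S → g = 0)
    (hn : ∀ i, n i ≠ 0) :
    (RingHom.ker (Tm k n S hmem).toRingHom).restrictScalars k ⊓
        weightedHomogeneousSubmodule k n (0 : G) = ⊥ := by
  rw [eq_bot_iff]
  intro p hp
  obtain ⟨hh, he⟩ := (mem_ISm_iff k n S hmem 0 p).mp hp
  rw [Submodule.mem_bot]
  have hs : ∀ a ∈ p.support, a = (0 : Fin r →₀ ℕ) := fun a ha =>
    weight_eq_zero_imp n S hmem hcf hn (hh (MvPolynomial.mem_support_iff.mp ha))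
  by_contra hp0
  obtain ⟨a, ha⟩ := Finset.nonempty_iff_ne_empty.mpr
    (fun habs => hp0 (MvPolynomial.support_eq_empty.mp habs))
  have h00 : (0 : Fin r →₀ ℕ) ∈ p.support := by
    have := hs a ha
    rwa [this] at ha
  have hsupp : p.support = {0} := by
    apply Finset.Subset.antisymm
    · intro x hx
      rw [Finset.mem_singleton]
      exact hs x hx
    · intro x hx
      rw [Finset.mem_singleton] at hx
      subst hx
      exact h00
  have hc : epsR k p = coeff 0 p := by
    rw [epsR_eq_sum, hsupp, Finset.sum_singleton]
  rw [he] at hc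
  exact MvPolynomial.mem_support_iff.mp h00 hc.symm

theorem sfaces1_empty (hmem : ∀ i, n i ∈ S) (hcf : ∀ g ∈ S, -g ∈ S → g = 0)
    (hn : ∀ i, n i ≠ 0) :
    sFaces (nablaLex n (0 : G)) 1 = (∅ : Set (Finset (Lex (Fin r →₀ ℕ)))) := by
  ext F
  simp only [Set.mem_empty_iff_false, iff_false]
  rintro ⟨hcard, hF⟩
  rcases hF with rfl | hF
  · simp at hcard
  obtain ⟨x, rfl⟩ := Finset.card_eq_one.mp hcard
  obtain ⟨-, hsum, i, hpos⟩ := hF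
  have hw : Finsupp.weight n (ofLex x) = 0 := hsum x (Finset.mem_singleton_self x)
  have h0 : ofLex x = 0 := weight_eq_zero_imp n S hmem hcf hn hw
  have := hpos x (Finset.mem_singleton_self x)
  rw [h0] at this
  simp at this

theorem cycles_bot (hmem : ∀ i, n i ∈ S) (hcf : ∀ g ∈ S, -g ∈ S → g = 0)
    (hn : ∀ i, n i ≠ 0) :
    sCycles k (nablaLex n (0 : G)) 0 = ⊥ := by
  rw [sCycles, show (0 + 1 : ℕ) = 1 from rfl, sfaces1_empty n S hmem hcf hn,
    Finsupp.supported_empty, bot_inf_eq]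

end Main3

end H0Aux

/-- For every `m ∈ S` there is a `k`-isomorphism `H̃₀(∇_m) ≅ (I_S)_m/(𝔪 I_S)_m`.
In particular `I_S` has a minimal generator of `S`-degree `m` (i.e. `(I_S)_m ≠ (𝔪 I_S)_m`)
if and only if `∇_m` is disconnected. -/
theorem H0_iso_V0
    {G : Type} [AddCommGroup G] (k : Type) [Field k]
    (S : AddSubmonoid G) (hFG : S.FG) (hcf : ∀ g ∈ S, -g ∈ S → g = 0)
    {r : ℕ} (n : Fin r → G) (hn : ∀ i, n i ≠ 0)
    (hgen : S = AddSubmonoid.closure (Set.range n)) (hmem : ∀ i, n i ∈ S)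
    (m : G) (hm : m ∈ S)
    (IS : Ideal (MvPolynomial (Fin r) k))
    (hIS : IS = RingHom.ker (MvPolynomial.aeval
        (fun i : Fin r => AddMonoidAlgebra.single (⟨n i, hmem i⟩ : S) (1 : k)) :
          MvPolynomial (Fin r) k →ₐ[k] AddMonoidAlgebra k S).toRingHom)
    (ISm mISm : Submodule k (MvPolynomial (Fin r) k))
    (hISm : ISm = IS.restrictScalars k ⊓ weightedHomogeneousSubmodule k n m)
    (hmISm : mISm =
      (Ideal.span (Set.range (X : Fin r → MvPolynomial (Fin r) k)) * IS).restrictScalars k ⊓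
        weightedHomogeneousSubmodule k n m) :
    Nonempty (↥(sHred k (nablaLex n m) 0) ≃ₗ[k] ↥(Submodule.map mISm.mkQ ISm)) ∧
    (ISm ≠ mISm ↔
      ¬ ∀ α ∈ {α : Fin r →₀ ℕ | (α.sum fun i e => e • n i) = m},
          ∀ β ∈ {α : Fin r →₀ ℕ | (α.sum fun i e => e • n i) = m},
            Relation.ReflTransGen
              (fun a b : Fin r →₀ ℕ =>
                (a.sum fun i e => e • n i) = m ∧ (b.sum fun i e => e • n i) = m ∧
                  ∃ i, a i ≠ 0 ∧ b i ≠ 0) α β) := by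
  classical
  have hT : RingHom.ker (MvPolynomial.aeval
      (fun i : Fin r => AddMonoidAlgebra.single (⟨n i, hmem i⟩ : S) (1 : k)) :
        MvPolynomial (Fin r) k →ₐ[k] AddMonoidAlgebra k S).toRingHom =
      RingHom.ker (H0Aux.Tm k n S hmem).toRingHom := rfl
  rw [hT] at hIS
  subst hIS
  subst hISm
  subst hmISm
  constructor
  · -- the isomorphism
    by_cases hm0 : m = 0
    · subst hm0
      rw [H0Aux.ISm_bot k n S hmem hcf hn, Submodule.map_bot]
      have hz : sHred k (nablaLex n (0 : G)) 0 = ⊥ := by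
        rw [sHred, H0Aux.cycles_bot k n S hmem hcf hn, Submodule.map_bot]
      rw [hz]
      exact ⟨Submodule.botEquivPUnit.{0}.trans Submodule.botEquivPUnit.{0}.symm⟩
    · have h := H0Aux.quotIso
        ((Ideal.span (Set.range (X : Fin r → MvPolynomial (Fin r) k)) *
            RingHom.ker (H0Aux.Tm k n S hmem).toRingHom).restrictScalars k ⊓
          weightedHomogeneousSubmodule k n m)
        ((RingHom.ker (H0Aux.Tm k n S hmem).toRingHom).restrictScalars k ⊓
          weightedHomogeneousSubmodule k n m)
        (sBoundaries k (nablaLex n m) 0) (sCycles k (nablaLex n m) 0)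
        (H0Aux.fm k)
        (H0Aux.cycles_char k n S hmem hm0)
        (fun z _ => H0Aux.fm_bdry_iff k n S hmem m z)
      exact h
  · -- minimal generators vs connectivity
    have hiff :
        ((RingHom.ker (H0Aux.Tm k n S hmem).toRingHom).restrictScalars k ⊓
            weightedHomogeneousSubmodule k n m =
          (Ideal.span (Set.range (X : Fin r → MvPolynomial (Fin r) k)) *
              RingHom.ker (H0Aux.Tm k n S hmem).toRingHom).restrictScalars k ⊓
            weightedHomogeneousSubmodule k n m) ↔
        (∀ α ∈ {α : Fin r →₀ ℕ | (α.sum fun i e => e • n i) = m},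
          ∀ β ∈ {α : Fin r →₀ ℕ | (α.sum fun i e => e • n i) = m},
            Relation.ReflTransGen
              (fun a b : Fin r →₀ ℕ =>
                (a.sum fun i e => e • n i) = m ∧ (b.sum fun i e => e • n i) = m ∧
                  ∃ i, a i ≠ 0 ∧ b i ≠ 0) α β) := by
      constructor
      · intro heq α hα β hβ
        by_contra hnr
        exact H0Aux.disconn_imp_ne k n S hmem m (hα : Finsupp.weight n α = m)
          (hβ : Finsupp.weight n β = m)
          (hnr : ¬ Relation.ReflTransGen (H0Aux.RelE n m) α β) heq
      · intro hconn
        exact H0Aux.conn_imp_eq k n S hmem m (fun a ha b hb => hconn a ha b hb)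
    exact not_congr hiff
end
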